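/- For every integer n ≥ 1, ∑_{k=0}^{n} C(n,k)·Bₖ·B_{n-k} = -(n-1)·Bₙ - n·B_{n-1}. -/

import Mathlib

/-!
The exponential generating function `B = X / (eˣ - 1)` of the Bernoulli numbers satisfies the
Riccati equation `B² = B - X B - X B'`: differentiate `B (eˣ - 1) = X` and multiply by `B`.
The `n`-th coefficient of `B²` is `(∑ C(n,k) Bₖ Bₙ₋ₖ) / n!`, and that of the right-hand side is
`(Bₙ - n Bₙ₋₁ - n Bₙ) / n!`.
-/

open PowerSeries Finset Nat

theorem coeff_mk_div_factorial_mul_mk_div_factorial (a b : ℕ → ℚ) (n : ℕ) :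
    coeff n (mk (fun k => a k / k !) * mk fun k => b k / k !) =
      (∑ k ∈ range (n + 1), n.choose k * a k * b (n - k)) / n ! := by
  rw [coeff_mul, Nat.sum_antidiagonal_eq_sum_range_succ_mk, sum_div]
  refine sum_congr rfl fun k hk => ?_
  have hkn : k ≤ n := Nat.lt_succ_iff.mp (mem_range.mp hk)
  rw [coeff_mk, coeff_mk, Nat.cast_choose ℚ hkn]
  field_simp

theorem sq_eq_of_mul_sub_one_eq_X {R : Type*} [CommRing R] {B E : R⟦X⟧}
    (hB : B * (E - 1) = X) (hE : d⁄dX R E = E) :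
    B ^ 2 = B - X * B - X * d⁄dX R B := by
  have hderiv : B * E + (E - 1) * d⁄dX R B = 1 := by
    simpa [hE, smul_eq_mul] using congrArg (d⁄dX R) hB
  linear_combination B * hderiv - (B + d⁄dX R B) * hB

theorem bernoulliPowerSeries_sq (A : Type*) [CommRing A] [Algebra ℚ A] :
    bernoulliPowerSeries A ^ 2 =
      bernoulliPowerSeries A - X * bernoulliPowerSeries A - X * d⁄dX A (bernoulliPowerSeries A) :=
  sq_eq_of_mul_sub_one_eq_X (bernoulliPowerSeries_mul_exp_sub_one A) (derivative_exp A)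

theorem bernoulliPowerSeries_rat :
    bernoulliPowerSeries ℚ = mk fun k => bernoulli k / k ! :=
  rfl

theorem bernoulli_convolution_full (n : ℕ) (hn : 1 ≤ n) :
    ∑ k ∈ Finset.range (n + 1), (n.choose k : ℚ) * bernoulli k * bernoulli (n - k) =
      -((n : ℚ) - 1) * bernoulli n - (n : ℚ) * bernoulli (n - 1) := by
  obtain ⟨m, rfl⟩ : ∃ m, n = m + 1 := ⟨n - 1, by omega⟩
  have hcoeff := congrArg (coeff (m + 1)) (bernoulliPowerSeries_sq ℚ)
  rw [sq, bernoulliPowerSeries_rat, coeff_mk_div_factorial_mul_mk_div_factorial] at hcoeff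
  simp only [map_sub, coeff_succ_X_mul, coeff_derivative, coeff_mk] at hcoeff
  rw [div_eq_iff (by positivity)] at hcoeff
  rw [hcoeff, Nat.add_sub_cancel, factorial_succ]
  push_cast
  field_simp
  ring
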